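/- arXiv:2512.09764 — 3 statements merged into one kernel-verified Lean document; each statement's English description precedes it below -/
import Mathlib

section
/- For every feasible solution of the two-stage model M and for every scenario s ∈ S, the total capacity of the dispatched fleet dominates the total demand delivered in that scenario: ∑_{i∈I} ∑_{p∈P} l_p · z_{ip} ≥ ∑_{i∈I} ∑_{j∈I} d_{js} · y_{ijs}. (These are the valid inequalities (17), which hold on the feasible region of M.) -/
open Finset

/-- Data of the two-stage model `M`: load capacities, demands and neighborhoods. -/
structure ModelData (ι P S : Type*) [Fintype ι] [Fintype P] [Fintype S] where
  /-- load capacity of each vehicle type -/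
  l : P → ℝ
  l_pos : ∀ p, 0 < l p
  /-- demand of node `i` under scenario `s` -/
  d : ι → S → ℝ
  d_nonneg : ∀ i s, 0 ≤ d i s
  /-- the neighborhood `Λ_i^+` of node `i` -/
  Λp : ι → Finset ι
  self_mem : ∀ i, i ∈ Λp i

/-- The maximal load capacity `l^max = max_{p ∈ P} l_p`. -/
noncomputable def ModelData.lmax {ι P S : Type*} [Fintype ι] [Fintype P] [Fintype S]
    [Nonempty P] (D : ModelData ι P S) : ℝ :=
  Finset.univ.sup' Finset.univ_nonempty D.l

/-- A (candidate) solution of model `M`.  The depot is the node `none : Option ι`,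
customer nodes are `some i`. -/
structure Sol (ι P S : Type*) where
  z : ι → P → ℝ
  v : ι → P → ℝ
  x : Option ι → ι → P → ℝ
  y : ι → ι → S → ℝ
  w : ι → S → ℝ
  u : ι → S → ℝ

/-- Feasibility for model `M`: binarity/nonnegativity of the variables together with
constraints (i)–(ix). -/
structure FeasibleM {ι P S : Type*} [Fintype ι] [Fintype P] [Fintype S] [Nonempty P]
    [DecidableEq ι] (D : ModelData ι P S) (m : Sol ι P S) : Prop where
  z_bin : ∀ i p, m.z i p = 0 ∨ m.z i p = 1
  v_bin : ∀ i p, m.v i p = 0 ∨ m.v i p = 1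
  x_bin : ∀ (i : Option ι) (j : ι) (p : P), i ≠ some j → (m.x i j p = 0 ∨ m.x i j p = 1)
  y_nonneg : ∀ i j s, 0 ≤ m.y i j s
  y_zero : ∀ i j s, j ∉ D.Λp i → m.y i j s = 0
  w_nonneg : ∀ i s, 0 ≤ m.w i s
  u_nonneg : ∀ i s, 0 ≤ m.u i s
  /-- (i) the number of routes leaving the depot equals the number of vehicles of type `p` -/
  depart : ∀ p, ∑ j, m.x none j p = ∑ i, m.z i p
  /-- (ii) flow balance: arcs entering `j` -/
  flow_in : ∀ p j,
    ∑ i ∈ univ.filter (fun i : Option ι => i ≠ some j), m.x i j p = m.z j p + m.v j p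
  /-- (iii) flow balance: arcs leaving `i` -/
  flow_out : ∀ p i, ∑ j ∈ univ.filter (fun j : ι => j ≠ i), m.x (some i) j p = m.v i p
  /-- (iv) each node is served by at most one vehicle type -/
  one_type : ∀ i, ∑ p, (m.z i p + m.v i p) ≤ 1
  /-- (v) recourse only from visited nodes -/
  y_le : ∀ i s, ∀ j ∈ D.Λp i, m.y i j s ≤ ∑ p, (m.z i p + m.v i p)
  /-- (vi) demand satisfaction -/
  demand_sat : ∀ j s, ∑ i ∈ univ.filter (fun i : ι => j ∈ D.Λp i), m.y i j s + m.w j s = 1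
  /-- (vii) load capacity upper bound -/
  cap_ub : ∀ i s, m.u i s ≤
    ∑ p, (m.z i p + m.v i p) * D.l p + (1 - ∑ p, (m.z i p + m.v i p)) * D.lmax
  /-- (viii) lower bound on the delivered load -/
  load_lb : ∀ i s, ∑ j ∈ D.Λp i, D.d j s * m.y i j s ≤ m.u i s
  /-- (ix) tracking the cumulative load along routes -/
  load_track : ∀ i j s, i ≠ j →
    m.u i s + ∑ h ∈ D.Λp j, D.d h s * m.y j h s
      - D.lmax * (1 - ∑ p, m.x (some i) j p) ≤ m.u j s

/-- Valid inequalities (17): for every feasible solution of `M` and every scenario `s`,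
the total capacity of the dispatched fleet dominates the total demand delivered in `s`:
`∑_{i∈I} ∑_{p∈P} l_p z_{ip} ≥ ∑_{i∈I} ∑_{j∈I} d_{js} y_{ijs}`. -/
theorem valid_inequality {ι P S : Type*} [Fintype ι] [Fintype P] [Fintype S] [Nonempty P]
    [DecidableEq ι] (D : ModelData ι P S) (m : Sol ι P S)
    (hm : FeasibleM D m) (s : S) :
    ∑ i, ∑ j, D.d j s * m.y i j s ≤ ∑ i, ∑ p, D.l p * m.z i p := by
  classical
  -- nonnegativity facts
  have hznn : ∀ i p, 0 ≤ m.z i p := fun i p => by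
    rcases hm.z_bin i p with h | h <;> rw [h] <;> norm_num
  have hvnn : ∀ i p, 0 ≤ m.v i p := fun i p => by
    rcases hm.v_bin i p with h | h <;> rw [h] <;> norm_num
  have hxnn : ∀ (i : Option ι) (j : ι) (p : P), i ≠ some j → 0 ≤ m.x i j p := fun i j p h => by
    rcases hm.x_bin i j p h with h' | h' <;> rw [h'] <;> norm_num
  have hGnn : ∀ j, 0 ≤ ∑ h ∈ D.Λp j, D.d h s * m.y j h s := fun j =>
    Finset.sum_nonneg fun h _ => mul_nonneg (D.d_nonneg h s) (hm.y_nonneg j h s)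
  have hlmax : 0 < D.lmax := by
    obtain ⟨p⟩ := ‹Nonempty P›
    exact lt_of_lt_of_le (D.l_pos p) (Finset.le_sup' D.l (mem_univ p))
  -- in-flow identity: for each j, the sum of customer-arc indicators into j
  have hin : ∀ j, ∑ i ∈ univ.erase j, (∑ p, m.x (some i) j p)
      = (∑ p, (m.z j p + m.v j p)) - ∑ p, m.x none j p := by
    intro j
    rw [Finset.sum_comm, ← Finset.sum_sub_distrib]
    refine Finset.sum_congr rfl fun p _ => ?_
    have h := hm.flow_in p j
    rw [show (univ.filter fun i : Option ι => i ≠ some j) = univ.erase (some j) from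
      Finset.filter_ne' _ _] at h
    rw [Finset.sum_erase_eq_sub (mem_univ (some j)), Fintype.sum_option] at h
    rw [Finset.sum_erase_eq_sub (mem_univ j)]
    linarith
  -- out-flow identity
  have hout : ∀ i, ∑ j ∈ univ.erase i, (∑ p, m.x (some i) j p) = ∑ p, m.v i p := by
    intro i
    rw [Finset.sum_comm]
    refine Finset.sum_congr rfl fun p _ => ?_
    have h := hm.flow_out p i
    rw [show (univ.filter fun j : ι => j ≠ i) = univ.erase i from
      Finset.filter_ne' _ _] at h
    exact h
  -- pointwise arc inequality
  have harc : ∀ i j, i ≠ j →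
      (∑ p, m.x (some i) j p) * m.u i s
        + (∑ p, m.x (some i) j p) * (∑ h ∈ D.Λp j, D.d h s * m.y j h s)
      ≤ (∑ p, m.x (some i) j p) * m.u j s := by
    intro i j hij
    have hsome : (some i : Option ι) ≠ some j := by simpa using hij
    by_cases hx : ∀ p, m.x (some i) j p = 0
    · have h0 : (∑ p, m.x (some i) j p) = 0 := Finset.sum_eq_zero fun p _ => hx p
      rw [h0]; ring_nf; exact le_refl _
    · push_neg at hx
      obtain ⟨p0, hp0⟩ := hx
      have h1 : m.x (some i) j p0 = 1 := (hm.x_bin _ _ _ hsome).resolve_left hp0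
      have hXc1 : (1 : ℝ) ≤ ∑ p, m.x (some i) j p := by
        calc (1 : ℝ) = m.x (some i) j p0 := h1.symm
          _ ≤ ∑ p, m.x (some i) j p :=
            Finset.single_le_sum (fun p _ => hxnn _ _ p hsome) (mem_univ p0)
      have htr := hm.load_track i j s hij
      have hu : m.u i s + (∑ h ∈ D.Λp j, D.d h s * m.y j h s) ≤ m.u j s := by
        nlinarith
      have hXnn : (0 : ℝ) ≤ ∑ p, m.x (some i) j p := by linarith
      nlinarith [mul_le_mul_of_nonneg_left hu hXnn]
  -- aggregated arc inequality
  have H1 : ∑ j, (∑ p, m.v j p) * m.u j s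
      + (∑ j, (∑ p, (m.z j p + m.v j p)) * (∑ h ∈ D.Λp j, D.d h s * m.y j h s)
        - ∑ j, (∑ p, m.x none j p) * (∑ h ∈ D.Λp j, D.d h s * m.y j h s))
      ≤ (∑ j, (∑ p, m.z j p) * m.u j s + ∑ j, (∑ p, m.v j p) * m.u j s)
        - ∑ j, (∑ p, m.x none j p) * m.u j s := by
    have hsum : ∑ j, ∑ i ∈ univ.erase j,
        ((∑ p, m.x (some i) j p) * m.u i s
          + (∑ p, m.x (some i) j p) * (∑ h ∈ D.Λp j, D.d h s * m.y j h s))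
        ≤ ∑ j, ∑ i ∈ univ.erase j, (∑ p, m.x (some i) j p) * m.u j s := by
      refine Finset.sum_le_sum fun j _ => Finset.sum_le_sum fun i hi => ?_
      exact harc i j (Finset.ne_of_mem_erase hi)
    have hRHS : ∑ j, ∑ i ∈ univ.erase j, (∑ p, m.x (some i) j p) * m.u j s
        = (∑ j, (∑ p, m.z j p) * m.u j s + ∑ j, (∑ p, m.v j p) * m.u j s)
          - ∑ j, (∑ p, m.x none j p) * m.u j s := by
      rw [← Finset.sum_add_distrib, ← Finset.sum_sub_distrib]
      refine Finset.sum_congr rfl fun j _ => ?_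
      rw [← Finset.sum_mul, hin j, Finset.sum_add_distrib]
      ring
    have hLHS : ∑ j, ∑ i ∈ univ.erase j,
        ((∑ p, m.x (some i) j p) * m.u i s
          + (∑ p, m.x (some i) j p) * (∑ h ∈ D.Λp j, D.d h s * m.y j h s))
        = ∑ j, (∑ p, m.v j p) * m.u j s
          + (∑ j, (∑ p, (m.z j p + m.v j p)) * (∑ h ∈ D.Λp j, D.d h s * m.y j h s)
            - ∑ j, (∑ p, m.x none j p) * (∑ h ∈ D.Λp j, D.d h s * m.y j h s)) := by
      have hsplit : ∑ j, ∑ i ∈ univ.erase j,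
          ((∑ p, m.x (some i) j p) * m.u i s
            + (∑ p, m.x (some i) j p) * (∑ h ∈ D.Λp j, D.d h s * m.y j h s))
          = (∑ j, ∑ i ∈ univ.erase j, (∑ p, m.x (some i) j p) * m.u i s)
            + ∑ j, ∑ i ∈ univ.erase j,
                (∑ p, m.x (some i) j p) * (∑ h ∈ D.Λp j, D.d h s * m.y j h s) := by
        rw [← Finset.sum_add_distrib]
        exact Finset.sum_congr rfl fun j _ => Finset.sum_add_distrib
      rw [hsplit]
      congr 1
      · -- swap the double sum and use the out-flow identity
        have hswap : ∑ j, ∑ i ∈ univ.erase j, (∑ p, m.x (some i) j p) * m.u i s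
            = ∑ i, ∑ j ∈ univ.erase i, (∑ p, m.x (some i) j p) * m.u i s := by
          refine Finset.sum_comm' ?_
          intro j i
          simp only [Finset.mem_univ, Finset.mem_erase, true_and, and_true]
          exact ⟨fun h => h.symm, fun h => h.symm⟩
        rw [hswap]
        refine Finset.sum_congr rfl fun i _ => ?_
        rw [← Finset.sum_mul, hout i]
      · rw [← Finset.sum_sub_distrib]
        refine Finset.sum_congr rfl fun j _ => ?_
        rw [← Finset.sum_mul, hin j]
        ring
    rw [← hLHS, ← hRHS]
    exact hsum
  -- the first node of each route: u dominates g there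
  have H2 : ∑ j, (∑ p, m.x none j p) * (∑ h ∈ D.Λp j, D.d h s * m.y j h s)
      ≤ ∑ j, (∑ p, m.x none j p) * m.u j s := by
    refine Finset.sum_le_sum fun j _ => ?_
    refine mul_le_mul_of_nonneg_left (hm.load_lb j s) ?_
    exact Finset.sum_nonneg fun p _ => hxnn none j p (by simp)
  -- unvisited nodes deliver nothing
  have H3 : ∑ j, (∑ h ∈ D.Λp j, D.d h s * m.y j h s)
      ≤ ∑ j, (∑ p, (m.z j p + m.v j p)) * (∑ h ∈ D.Λp j, D.d h s * m.y j h s) := by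
    refine Finset.sum_le_sum fun j _ => ?_
    by_cases hz : ∀ p, m.z j p = 0 ∧ m.v j p = 0
    · have ht0 : (∑ p, (m.z j p + m.v j p)) = 0 :=
        Finset.sum_eq_zero fun p _ => by rw [(hz p).1, (hz p).2, add_zero]
      have hy : ∀ h ∈ D.Λp j, m.y j h s = 0 := fun h hh =>
        le_antisymm (by rw [← ht0]; exact hm.y_le j s h hh) (hm.y_nonneg j h s)
      have hG0 : (∑ h ∈ D.Λp j, D.d h s * m.y j h s) = 0 :=
        Finset.sum_eq_zero fun h hh => by rw [hy h hh, mul_zero]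
      rw [hG0, mul_zero]
    · push_neg at hz
      obtain ⟨p0, hp0⟩ := hz
      have h1 : (1 : ℝ) ≤ m.z j p0 + m.v j p0 := by
        by_cases hzp : m.z j p0 = 0
        · have hv1 : m.v j p0 = 1 := (hm.v_bin j p0).resolve_left (hp0 hzp)
          rw [hzp, hv1]; norm_num
        · have hz1 : m.z j p0 = 1 := (hm.z_bin j p0).resolve_left hzp
          have := hvnn j p0; rw [hz1]; linarith
      have ht1 : (1 : ℝ) ≤ ∑ p, (m.z j p + m.v j p) :=
        le_trans h1 (Finset.single_le_sum
          (fun p _ => add_nonneg (hznn j p) (hvnn j p)) (mem_univ p0))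
      exact le_mul_of_one_le_left (hGnn j) ht1
  -- capacity bound at route ends
  have H4 : ∑ j, (∑ p, m.z j p) * m.u j s ≤ ∑ j, ∑ p, D.l p * m.z j p := by
    refine Finset.sum_le_sum fun j _ => ?_
    by_cases hz : ∀ p, m.z j p = 0
    · have h0 : (∑ p, m.z j p) = 0 := Finset.sum_eq_zero fun p _ => hz p
      have h0' : (∑ p, D.l p * m.z j p) = 0 :=
        Finset.sum_eq_zero fun p _ => by rw [hz p, mul_zero]
      rw [h0, h0', zero_mul]
    · push_neg at hz
      obtain ⟨p0, hp0⟩ := hz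
      have hz1 : m.z j p0 = 1 := (hm.z_bin j p0).resolve_left hp0
      have hZge : (1 : ℝ) ≤ ∑ p, m.z j p := by
        calc (1 : ℝ) = m.z j p0 := hz1.symm
          _ ≤ ∑ p, m.z j p := Finset.single_le_sum (fun p _ => hznn j p) (mem_univ p0)
      have hone := hm.one_type j
      have hzv : ∑ p, (m.z j p + m.v j p) = ∑ p, m.z j p + ∑ p, m.v j p :=
        Finset.sum_add_distrib
      have hVnn : (0 : ℝ) ≤ ∑ p, m.v j p := Finset.sum_nonneg fun p _ => hvnn j p
      have hZ1 : (∑ p, m.z j p) = 1 := le_antisymm (by linarith) hZge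
      have hV0 : (∑ p, m.v j p) = 0 := by linarith
      have hveach : ∀ p, m.v j p = 0 := by
        intro p
        have := (Finset.sum_eq_zero_iff_of_nonneg fun p _ => hvnn j p).mp hV0
        exact this p (mem_univ p)
      have ht1 : (∑ p, (m.z j p + m.v j p)) = 1 := by rw [hzv]; linarith
      have hcap := hm.cap_ub j s
      rw [ht1] at hcap
      rw [hZ1, one_mul]
      calc m.u j s ≤ ∑ p, (m.z j p + m.v j p) * D.l p + (1 - 1) * D.lmax := hcap
        _ = ∑ p, D.l p * m.z j p := by
            rw [sub_self, zero_mul, add_zero]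
            exact Finset.sum_congr rfl fun p _ => by rw [hveach p, add_zero, mul_comm]
  -- rewrite the goal's left-hand side as a sum over neighborhoods
  have H0 : ∑ i, ∑ j, D.d j s * m.y i j s = ∑ i, ∑ h ∈ D.Λp i, D.d h s * m.y i h s := by
    refine Finset.sum_congr rfl fun i _ => ?_
    exact (Finset.sum_subset (Finset.subset_univ _)
      (fun j _ hj => by rw [hm.y_zero i j s hj, mul_zero])).symm
  rw [H0]
  linarith
end

section
/- The minimum cost over all transport plans from (S, π) to the retained set J is attained and equals ∑_{s∈S∖J} π_s · min_{t∈J} ‖d_s − d_t‖. Consequently, the optimal reduced distance D^RED = min{ D(J; q) : q a probability distribution on J } satisfies D^RED = ∑_{s̃∉J} π_{s̃} · min_{s∈J} ‖d_{s̃} − d_s‖ (equation (red_formula)). -/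
open Finset

/-- A transport plan from `(S, π)` to the retained set `J ⊆ S`:
`η s t ≥ 0` for `t ∈ J`, and the row marginals are `∑_{t∈J} η s t = π s`. -/
def IsTransportPlan {S : Type*} [Fintype S] (J : Finset S) (π : S → ℝ)
    (η : S → S → ℝ) : Prop :=
  (∀ s : S, ∀ t ∈ J, 0 ≤ η s t) ∧ ∀ s : S, ∑ t ∈ J, η s t = π s

/-- The minimum cost over all transport plans from `(S, π)` to `J` is attained and
equals `∑_{s ∈ S∖J} π_s · min_{t∈J} ‖d_s − d_t‖`.  Consequently, the optimal reduced
distance `D^RED = min_q D(J; q)` — the minimum over probability distributions `q` on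
`J` of the minimum cost of transport plans whose column marginals are `q` — also
equals `∑_{s̃∉J} π_{s̃} · min_{s∈J} ‖d_{s̃} − d_s‖` (equation (red_formula)). -/
theorem optimal_transport_value {S : Type*} [Fintype S] [Nonempty S] [DecidableEq S] {n : ℕ}
    (J : Finset S) (hJ : J.Nonempty) (π : S → ℝ)
    (hπ0 : ∀ s, 0 ≤ π s) (hπ1 : ∑ s, π s = 1)
    (d : S → EuclideanSpace ℝ (Fin n)) :
    IsLeast {c : ℝ | ∃ η : S → S → ℝ, IsTransportPlan J π η ∧
        ∑ s, ∑ u ∈ J, η s u * ‖d s - d u‖ = c}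
      (∑ s ∈ univ \ J, π s * J.inf' hJ (fun u => ‖d s - d u‖)) ∧
    IsLeast {Dred : ℝ | ∃ q : S → ℝ, (∀ u ∈ J, 0 ≤ q u) ∧ (∑ u ∈ J, q u = 1) ∧
        IsLeast {c : ℝ | ∃ η : S → S → ℝ, IsTransportPlan J π η ∧
            (∀ u ∈ J, ∑ s, η s u = q u) ∧
            ∑ s, ∑ u ∈ J, η s u * ‖d s - d u‖ = c} Dred}
      (∑ s ∈ univ \ J, π s * J.inf' hJ (fun u => ‖d s - d u‖)) := by
  set m : S → ℝ := fun s => J.inf' hJ (fun u => ‖d s - d u‖) with hm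
  have hm0 : ∀ s, 0 ≤ m s := fun s =>
    Finset.le_inf' hJ _ (fun u _ => norm_nonneg _)
  have hmJ : ∀ s ∈ J, m s = 0 := by
    intro s hs
    refine le_antisymm ?_ (hm0 s)
    have := Finset.inf'_le (fun u => ‖d s - d u‖) hs
    simpa only [sub_self, norm_zero] using this
  -- the target equals the full sum
  have hsum_eq : ∑ s ∈ univ \ J, π s * m s = ∑ s, π s * m s := by
    rw [← Finset.sum_sdiff (Finset.subset_univ J)]
    have : ∑ s ∈ J, π s * m s = 0 :=
      Finset.sum_eq_zero (fun s hs => by rw [hmJ s hs, mul_zero])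
    rw [this, add_zero]
  -- lower bound for any plan
  have hlb : ∀ η : S → S → ℝ, IsTransportPlan J π η →
      ∑ s ∈ univ \ J, π s * m s ≤ ∑ s, ∑ u ∈ J, η s u * ‖d s - d u‖ := by
    intro η ⟨h0, hrow⟩
    rw [hsum_eq]
    refine Finset.sum_le_sum (fun s _ => ?_)
    calc π s * m s = ∑ u ∈ J, η s u * m s := by rw [← Finset.sum_mul, hrow s]
      _ ≤ ∑ u ∈ J, η s u * ‖d s - d u‖ := by
          refine Finset.sum_le_sum (fun u hu => ?_)
          exact mul_le_mul_of_nonneg_left (Finset.inf'_le _ hu) (h0 s u hu)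
  -- the nearest-point map
  have hex : ∀ s : S, ∃ t ∈ J, m s = ‖d s - d t‖ := fun s =>
    Finset.exists_mem_eq_inf' hJ _
  choose t ht htval using hex
  set η₀ : S → S → ℝ := fun s u => if u = t s then π s else 0 with hη₀
  have hplan : IsTransportPlan J π η₀ := by
    constructor
    · intro s u _
      simp only [hη₀]
      split
      · exact hπ0 s
      · exact le_rfl
    · intro s
      simp [hη₀, Finset.sum_ite_eq', ht s]
  have hcost : ∑ s, ∑ u ∈ J, η₀ s u * ‖d s - d u‖ = ∑ s ∈ univ \ J, π s * m s := by
    rw [hsum_eq]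
    refine Finset.sum_congr rfl (fun s _ => ?_)
    have : ∀ u ∈ J, η₀ s u * ‖d s - d u‖ =
        (if u = t s then π s * ‖d s - d u‖ else 0) := by
      intro u _
      simp only [hη₀]
      split <;> simp
    rw [Finset.sum_congr rfl this]
    rw [Finset.sum_ite_eq' J (t s) (fun u => π s * ‖d s - d u‖)]
    simp [ht s, htval s]
  have hfirst : IsLeast {c : ℝ | ∃ η : S → S → ℝ, IsTransportPlan J π η ∧
      ∑ s, ∑ u ∈ J, η s u * ‖d s - d u‖ = c}
      (∑ s ∈ univ \ J, π s * m s) := by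
    constructor
    · exact ⟨η₀, hplan, hcost⟩
    · rintro c ⟨η, hη, rfl⟩; exact hlb η hη
  refine ⟨hfirst, ?_, ?_⟩
  · -- membership: take q = column marginals of η₀
    refine ⟨fun u => ∑ s, η₀ s u, ?_, ?_, ?_, ?_⟩
    · intro u hu
      exact Finset.sum_nonneg (fun s _ => hplan.1 s u hu)
    · rw [Finset.sum_comm]
      rw [Finset.sum_congr rfl (fun s _ => hplan.2 s), hπ1]
    · exact ⟨η₀, hplan, fun u _ => rfl, hcost⟩
    · rintro c ⟨η, hη, _, rfl⟩; exact hlb η hη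
  · rintro D ⟨q, hq0, hq1, ⟨η, hη, hcol, hc⟩, _⟩
    rw [← hc]; exact hlb η hη
end

section
/- Choose for each scenario s ∈ S a nearest retained scenario t(s) ∈ J, i.e. t(s) minimizes c_{s t} over t ∈ J, with t(s) = s whenever s ∈ J, and define the optimal redistribution rule q*_t = π_t + ∑_{s ∈ S∖J : t(s) = t} π_s for t ∈ J. Then q* is a probability distribution on J (q*_t ≥ 0 for all t ∈ J and ∑_{t∈J} q*_t = 1), and it attains the optimal reduced distance: D(J; q*) = ∑_{s∈S∖J} π_s · min_{t∈J} ‖d_s − d_t‖. -/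
open Finset

/-- The optimal redistribution rule: given a nearest-retained-scenario map `t`
(with `t s ∈ J` minimizing `‖d s − d u‖` over `u ∈ J`, and `t s = s` for `s ∈ J`),
define `q*_u = π_u + ∑_{s ∈ S∖J, t s = u} π_s` for `u ∈ J`.  Then `q*` is a
probability distribution on `J`, and it attains the optimal reduced distance:
`D(J; q*) = ∑_{s ∈ S∖J} π_s · min_{u∈J} ‖d_s − d_u‖`, where `D(J; q*)` is the
minimum cost of transport plans with column marginals `q*`. -/
theorem optimal_redistribution_rule {S : Type*} [Fintype S] [Nonempty S] [DecidableEq S] {n : ℕ}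
    (J : Finset S) (hJ : J.Nonempty) (π : S → ℝ)
    (hπ0 : ∀ s, 0 ≤ π s) (hπ1 : ∑ s, π s = 1)
    (d : S → EuclideanSpace ℝ (Fin n))
    (t : S → S) (ht_mem : ∀ s, t s ∈ J)
    (ht_min : ∀ s, ∀ u ∈ J, ‖d s - d (t s)‖ ≤ ‖d s - d u‖)
    (ht_id : ∀ s ∈ J, t s = s)
    (q : S → ℝ)
    (hq : ∀ u, q u = π u + ∑ s ∈ (univ \ J).filter (fun s => t s = u), π s) :
    (∀ u ∈ J, 0 ≤ q u) ∧ (∑ u ∈ J, q u = 1) ∧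
      IsLeast {c : ℝ | ∃ η : S → S → ℝ, IsTransportPlan J π η ∧
          (∀ u ∈ J, ∑ s, η s u = q u) ∧
          ∑ s, ∑ u ∈ J, η s u * ‖d s - d u‖ = c}
        (∑ s ∈ univ \ J, π s * J.inf' hJ (fun u => ‖d s - d u‖)) := by
  have hinf : ∀ s, J.inf' hJ (fun u => ‖d s - d u‖) = ‖d s - d (t s)‖ := by
    intro s
    apply le_antisymm (inf'_le _ (ht_mem s))
    exact le_inf' _ _ fun u hu => ht_min s u hu
  have hsplit : ∑ s, π s = ∑ s ∈ J, π s + ∑ s ∈ univ \ J, π s := by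
    rw [Finset.sum_sdiff_eq_sub (subset_univ J)]; ring
  refine ⟨?_, ?_, ?_, ?_⟩
  · intro u hu
    rw [hq u]
    have : 0 ≤ ∑ s ∈ (univ \ J).filter (fun s => t s = u), π s :=
      Finset.sum_nonneg fun s _ => hπ0 s
    linarith [hπ0 u]
  · -- sum of q over J is 1
    have hfib : ∑ u ∈ J, ∑ s ∈ (univ \ J).filter (fun s => t s = u), π s
        = ∑ s ∈ univ \ J, π s :=
      Finset.sum_fiberwise_of_maps_to (fun s _ => ht_mem s) π
    calc ∑ u ∈ J, q u = ∑ u ∈ J, (π u + ∑ s ∈ (univ \ J).filter (fun s => t s = u), π s) := by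
          simp [hq]
      _ = ∑ u ∈ J, π u + ∑ s ∈ univ \ J, π s := by rw [Finset.sum_add_distrib, hfib]
      _ = 1 := by rw [← hsplit, hπ1]
  · -- membership
    refine ⟨fun s u => if t s = u then π s else 0, ⟨?_, ?_⟩, ?_, ?_⟩
    · intro s u hu; dsimp; split <;> [exact hπ0 s; exact le_rfl]
    · intro s
      rw [Finset.sum_ite_eq J (t s) (fun _ => π s)]
      simp [ht_mem s]
    · intro u hu
      rw [hq u]
      have h1 : ∑ s, (if t s = u then π s else 0)
          = ∑ s ∈ J, (if t s = u then π s else 0)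
            + ∑ s ∈ univ \ J, (if t s = u then π s else 0) := by
        rw [Finset.sum_sdiff_eq_sub (subset_univ J)]; ring
      have h2 : ∑ s ∈ J, (if t s = u then π s else 0) = π u := by
        rw [Finset.sum_congr rfl (fun s hs => by rw [ht_id s hs])]
        rw [Finset.sum_ite_eq' J u (fun s => π s)]
        simp [hu]
      have h3 : ∑ s ∈ univ \ J, (if t s = u then π s else 0)
          = ∑ s ∈ (univ \ J).filter (fun s => t s = u), π s := by
        rw [Finset.sum_filter]
      rw [h1, h2, h3]
    · have hrow : ∀ s, ∑ u ∈ J, (if t s = u then π s else 0) * ‖d s - d u‖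
          = π s * ‖d s - d (t s)‖ := by
        intro s
        have : ∀ u ∈ J, (if t s = u then π s else 0) * ‖d s - d u‖
            = if t s = u then π s * ‖d s - d u‖ else 0 := by
          intro u hu; split <;> simp
        rw [Finset.sum_congr rfl this, Finset.sum_ite_eq J (t s)]
        simp [ht_mem s]
      have h1 : ∑ s, π s * ‖d s - d (t s)‖
          = ∑ s ∈ J, π s * ‖d s - d (t s)‖ + ∑ s ∈ univ \ J, π s * ‖d s - d (t s)‖ := by
        rw [Finset.sum_sdiff_eq_sub (subset_univ J)]; ring
      have h2 : ∑ s ∈ J, π s * ‖d s - d (t s)‖ = 0 := by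
        apply Finset.sum_eq_zero; intro s hs; rw [ht_id s hs]; simp
      calc ∑ s, ∑ u ∈ J, (if t s = u then π s else 0) * ‖d s - d u‖
          = ∑ s, π s * ‖d s - d (t s)‖ := Finset.sum_congr rfl fun s _ => hrow s
        _ = ∑ s ∈ univ \ J, π s * ‖d s - d (t s)‖ := by rw [h1, h2, zero_add]
        _ = ∑ s ∈ univ \ J, π s * J.inf' hJ (fun u => ‖d s - d u‖) := by
            exact Finset.sum_congr rfl fun s _ => by rw [hinf s]
  · -- lower bound
    rintro c ⟨η, ⟨hη0, hηrow⟩, hcol, rfl⟩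
    have key : ∀ s, π s * J.inf' hJ (fun u => ‖d s - d u‖) ≤ ∑ u ∈ J, η s u * ‖d s - d u‖ := by
      intro s
      calc π s * J.inf' hJ (fun u => ‖d s - d u‖)
          = ∑ u ∈ J, η s u * J.inf' hJ (fun u => ‖d s - d u‖) := by
            rw [← Finset.sum_mul, hηrow s]
        _ ≤ ∑ u ∈ J, η s u * ‖d s - d u‖ := by
            apply Finset.sum_le_sum; intro u hu
            exact mul_le_mul_of_nonneg_left (inf'_le _ hu) (hη0 s u hu)
    calc ∑ s ∈ univ \ J, π s * J.inf' hJ (fun u => ‖d s - d u‖)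
        ≤ ∑ s, π s * J.inf' hJ (fun u => ‖d s - d u‖) := by
          apply Finset.sum_le_sum_of_subset_of_nonneg (Finset.sdiff_subset)
          intro s _ _
          apply mul_nonneg (hπ0 s)
          rw [hinf s]; positivity
      _ ≤ ∑ s, ∑ u ∈ J, η s u * ‖d s - d u‖ := Finset.sum_le_sum fun s _ => key s
end
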